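/- Let K ≥ 2, 1 > θ_1 > θ_2 > … > θ_K > 0, c > 0, ε ∈ (0,1/2), and assume θ_1 ≠ μ((1,2)). Let u* = (1) and S = {2,…,K} if θ_1 > μ((1,2)), and u* = (1,2) and S = {3,…,K} otherwise; let μ* = max(θ_1, μ((1,2))). Set θ̄ := θ_2 if u* = (1,2), and θ̄ := min(θ_1, (c+εθ_1)/p0(θ_1)) if u* = (1); then θ_k < θ̄ for all k ∈ S. For each k ∈ S and q ∈ (θ_k, 1), define D_{(k)}(q) := I(θ_k,q); D_{(k,1)}(q) := (1−ε)θ_k log(θ_k/q) + ε(1−θ_k) log((1−θ_k)/(1−q)) + p0(θ_k) log(p0(θ_k)/p0(q)); D_{(k,1,k)}(q) := (1−p0(θ_k)) log((1−p0(θ_k))/(1−p0(q))) + εθ_k log(θ_k/q) + (1−ε)(1−θ_k) log((1−θ_k)/(1−q)); D_{(k,1,1)}(q) := (1−p0(θ_k)) log((1−p0(θ_k))/(1−p0(q))) + p0(θ_k) log(p0(θ_k)/p0(q)). Consider minimizing Σ_{k∈S} Σ_{u∈U_1(k)} η_{k,u}(μ* − μ(u)) over nonnegative η subject to Σ_{u∈U_1(k)}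 η_{k,u} D_u(θ̄) ≥ 1 for every k ∈ S, where U_1(k) = {(k), (k,1), (k,1,k), (k,1,1)}. Then each D_u(θ̄) > 0 and the minimum value equals C_ε(θ) = Σ_{k∈S} min_{u∈U_1(k)} (μ* − μ(u))/D_u(θ̄). -/

import Mathlib

/-!
The constraints decouple over the arms `k ∈ S`, and for each of them the cheapest way to buy one
unit of information is to put all weight on the policy of `U_1(k)` with the smallest ratio
`(μ* - μ(u)) / D_u(θ̄)`. This yields `C_ε(θ)` as soon as every regret is nonnegative and every
`D_u(θ̄)` positive.

Each `D_u(θ̄)` is a sum of terms `w a log (a / b)`, each at least `w (a - b)` by `log x ≤ x - 1`;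
these lower bounds cancel, and one is strict because `θ_k ≠ θ̄` and `p0 ε` is injective for
`ε ≠ 1/2`. As for the regrets, measuring is symmetric, `μ((k,1)) = μ((1,k)) ≤ μ((1,2))`, and
`μ((k,1,k)) ≤ μ((k,1,1)) = θ_1 - c`.
-/

noncomputable section

/-- `p0 ε x = ε x + (1−ε)(1−x)`: probability that the ε-noisy measurement of a
Bernoulli(x) arm returns 0. -/
def p0 (ε x : ℝ) : ℝ := ε * x + (1 - ε) * (1 - x)

/-- A static policy: either play arm `k` directly, or measure arm `k` and play
arm `l` if the measurement is 1 and arm `m` if it is 0. -/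
inductive Policy where
  | play (k : ℕ)
  | meas (k l m : ℕ)
deriving DecidableEq

/-- Mean reward `μ(u)` of a static policy `u`, with arm means `θ`, noise level `ε`,
and measurement cost `c`. -/
def reward (θ : ℕ → ℝ) (ε c : ℝ) : Policy → ℝ
  | .play k => θ k
  | .meas k l m =>
      -c + (if l = k then (1 - ε) * θ k else (1 - p0 ε (θ k)) * θ l)
         + (if m = k then ε * θ k else p0 ε (θ k) * θ m)

/-- `I(p,q)`: KL divergence between Bernoulli(p) and Bernoulli(q). -/
def klBer (p q : ℝ) : ℝ :=
  p * Real.log (p / q) + (1 - p) * Real.log ((1 - p) / (1 - q))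

/-- The four exploratory policies `U_1(k) = {(k), (k,1), (k,1,k), (k,1,1)}`. -/
def pol9 (k : ℕ) : Fin 4 → Policy :=
  ![.play k, .meas k k 1, .meas k 1 k, .meas k 1 1]

/-- The KL divergences `D_u(q) = KL(ν_θ(u) ‖ ν_{(θ^{(−k)},q)}(u))` for the four policies
of `U_1(k)`. -/
def D9 (θ : ℕ → ℝ) (ε : ℝ) (k : ℕ) (q : ℝ) : Fin 4 → ℝ :=
  ![klBer (θ k) q,
    (1 - ε) * θ k * Real.log (θ k / q)
      + ε * (1 - θ k) * Real.log ((1 - θ k) / (1 - q))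
      + p0 ε (θ k) * Real.log (p0 ε (θ k) / p0 ε q),
    (1 - p0 ε (θ k)) * Real.log ((1 - p0 ε (θ k)) / (1 - p0 ε q))
      + ε * θ k * Real.log (θ k / q)
      + (1 - ε) * (1 - θ k) * Real.log ((1 - θ k) / (1 - q)),
    (1 - p0 ε (θ k)) * Real.log ((1 - p0 ε (θ k)) / (1 - p0 ε q))
      + p0 ε (θ k) * Real.log (p0 ε (θ k) / p0 ε q)]

open Real

lemma sub_le_mul_log_div {a b : ℝ} (ha : 0 < a) (hb : 0 < b) : a - b ≤ a * log (a / b) := by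
  have h := one_sub_inv_le_log_of_pos (div_pos ha hb)
  rw [inv_div] at h
  calc a - b = a * (1 - b / a) := by field_simp
    _ ≤ a * log (a / b) := mul_le_mul_of_nonneg_left h ha.le

lemma sub_lt_mul_log_div {a b : ℝ} (ha : 0 < a) (hb : 0 < b) (hab : a ≠ b) :
    a - b < a * log (a / b) := by
  have h := log_lt_sub_one_of_pos (div_pos hb ha)
    (by rwa [ne_eq, div_eq_one_iff_eq ha.ne', eq_comm])
  calc a - b = -(a * (b / a - 1)) := by field_simp; ring
    _ < -(a * log (b / a)) := neg_lt_neg (mul_lt_mul_of_pos_left h ha)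
    _ = a * log (a / b) := by rw [← inv_div a b, log_inv, mul_neg, neg_neg]

section p0

variable {ε x : ℝ}

lemma one_sub_p0 (ε x : ℝ) : 1 - p0 ε x = p0 ε (1 - x) := by
  unfold p0; ring

lemma p0_sub_p0 (ε x y : ℝ) : p0 ε x - p0 ε y = (1 - 2 * ε) * (y - x) := by
  unfold p0; ring

lemma p0_injective (hε : ε ≠ 1 / 2) : Function.Injective (p0 ε) := by
  intro x y h
  have := p0_sub_p0 ε x y
  rw [h, sub_self, eq_comm, mul_eq_zero, sub_eq_zero, sub_eq_zero] at this
  exact this.resolve_left (by contrapose! hε; linarith) |>.symm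

lemma p0_nonneg (hε0 : 0 ≤ ε) (hε1 : ε ≤ 1) (hx0 : 0 ≤ x) (hx1 : x ≤ 1) : 0 ≤ p0 ε x := by
  unfold p0
  have := mul_nonneg (sub_nonneg.2 hε1) (sub_nonneg.2 hx1)
  positivity

lemma p0_pos (hε0 : 0 ≤ ε) (hε1 : ε < 1) (hx0 : 0 ≤ x) (hx1 : x < 1) : 0 < p0 ε x := by
  unfold p0
  have := mul_pos (sub_pos.2 hε1) (sub_pos.2 hx1)
  positivity

end p0

section reward

variable {θ : ℕ → ℝ} {ε c : ℝ} {k l m : ℕ}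

lemma reward_meas_self (hmk : m ≠ k) :
    reward θ ε c (.meas k k m) = -c + (1 - ε) * θ k + p0 ε (θ k) * θ m := by
  simp [reward, hmk]

lemma reward_meas_self_comm (hkm : k ≠ m) :
    reward θ ε c (.meas k k m) = reward θ ε c (.meas m m k) := by
  rw [reward_meas_self hkm.symm, reward_meas_self hkm]
  unfold p0; ring

lemma reward_meas_self_le_reward_meas_self (hlk : l ≠ k) (hmk : m ≠ k)
    (hp : 0 ≤ p0 ε (θ k)) (hlm : θ l ≤ θ m) :
    reward θ ε c (.meas k k l) ≤ reward θ ε c (.meas k k m) := by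
  rw [reward_meas_self hlk, reward_meas_self hmk]
  linarith [mul_le_mul_of_nonneg_left hlm hp]

lemma reward_meas_const (hlk : l ≠ k) : reward θ ε c (.meas k l l) = -c + θ l := by
  simp only [reward, if_neg hlk]
  ring

lemma reward_meas_fallback_self_le (hlk : l ≠ k) (hε : ε ≤ 1 / 2) (hk0 : 0 ≤ θ k)
    (hk1 : θ k ≤ 1) (hp : 0 ≤ p0 ε (θ k)) (hkl : θ k ≤ θ l) :
    reward θ ε c (.meas k l k) ≤ reward θ ε c (.meas k l l) := by
  have hgap : p0 ε (θ k) * θ k - ε * θ k = (1 - 2 * ε) * (1 - θ k) * θ k := by unfold p0; ring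
  have hgap_nonneg : 0 ≤ (1 - 2 * ε) * (1 - θ k) * θ k :=
    mul_nonneg (mul_nonneg (by linarith) (sub_nonneg.2 hk1)) hk0
  simp only [reward, if_neg hlk, ↓reduceIte]
  linarith [mul_le_mul_of_nonneg_left hkl hp]

lemma lt_div_p0_of_reward_meas_self_lt (hmk : m ≠ k) (hp : 0 < p0 ε (θ k))
    (h : reward θ ε c (.meas k k m) < θ k) : θ m < (c + ε * θ k) / p0 ε (θ k) := by
  rw [reward_meas_self hmk] at h
  rw [lt_div_iff₀ hp]
  linarith

end reward

lemma D9_pos {θ : ℕ → ℝ} {ε q : ℝ} {k : ℕ} (hε0 : 0 ≤ ε) (hε : ε < 1 / 2)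
    (hθ0 : 0 < θ k) (hθ1 : θ k < 1) (hq0 : 0 < q) (hq1 : q < 1) (hθq : θ k ≠ q) (i : Fin 4) :
    0 < D9 θ ε k q i := by
  have hε1 : ε < 1 := by linarith
  have hp : 0 < p0 ε (θ k) := p0_pos hε0 hε1 hθ0.le hθ1
  have hpq : 0 < p0 ε q := p0_pos hε0 hε1 hq0.le hq1
  have hp' : 0 < 1 - p0 ε (θ k) := by
    rw [one_sub_p0]; exact p0_pos hε0 hε1 (by linarith) (by linarith)
  have hpq' : 0 < 1 - p0 ε q := by
    rw [one_sub_p0]; exact p0_pos hε0 hε1 (by linarith) (by linarith)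
  have hne : 1 - p0 ε (θ k) ≠ 1 - p0 ε q := by
    simpa only [ne_eq, sub_right_inj] using (p0_injective hε.ne).ne hθq
  have hp0_diff := p0_sub_p0 ε (θ k) q
  have hlog := sub_le_mul_log_div hθ0 hq0
  have hlog' := sub_le_mul_log_div (sub_pos.2 hθ1) (sub_pos.2 hq1)
  fin_cases i
  · show 0 < klBer (θ k) q
    unfold klBer
    linarith [sub_lt_mul_log_div hθ0 hq0 hθq]
  · show 0 < (1 - ε) * θ k * log (θ k / q) + ε * (1 - θ k) * log ((1 - θ k) / (1 - q))
      + p0 ε (θ k) * log (p0 ε (θ k) / p0 ε q)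
    linarith [mul_lt_mul_of_pos_left (sub_lt_mul_log_div hθ0 hq0 hθq) (sub_pos.2 hε1),
      sub_le_mul_log_div hp hpq,
      mul_le_mul_of_nonneg_left hlog' hε0]
  · show 0 < (1 - p0 ε (θ k)) * log ((1 - p0 ε (θ k)) / (1 - p0 ε q))
      + ε * θ k * log (θ k / q) + (1 - ε) * (1 - θ k) * log ((1 - θ k) / (1 - q))
    linarith [sub_lt_mul_log_div hp' hpq' hne, mul_le_mul_of_nonneg_left hlog hε0,
      mul_le_mul_of_nonneg_left hlog' (sub_nonneg.2 hε1.le)]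
  · show 0 < (1 - p0 ε (θ k)) * log ((1 - p0 ε (θ k)) / (1 - p0 ε q))
      + p0 ε (θ k) * log (p0 ε (θ k) / p0 ε q)
    linarith [sub_lt_mul_log_div hp' hpq' hne, sub_le_mul_log_div hp hpq]

lemma reward_pol9_le {θ : ℕ → ℝ} {ε c : ℝ} {k : ℕ} (hk : k ≠ 1) (hc : 0 ≤ c) (hε0 : 0 ≤ ε)
    (hε : ε ≤ 1 / 2) (hk0 : 0 ≤ θ k) (hk2 : θ k ≤ θ 2) (h21 : θ 2 ≤ θ 1) (h1 : θ 1 ≤ 1)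
    (i : Fin 4) : reward θ ε c (pol9 k i) ≤ max (θ 1) (reward θ ε c (.meas 1 1 2)) := by
  have hp : ∀ x, 0 ≤ x → x ≤ 1 → 0 ≤ p0 ε x := fun _ => p0_nonneg hε0 (by linarith)
  have hk1 : θ k ≤ θ 1 := hk2.trans h21
  have hmeas1 : reward θ ε c (.meas k 1 1) ≤ θ 1 := by
    rw [reward_meas_const hk.symm]; linarith
  fin_cases i
  · exact le_max_of_le_left hk1
  · refine le_max_of_le_right ?_
    show reward θ ε c (.meas k k 1) ≤ _
    rw [reward_meas_self_comm hk]
    exact reward_meas_self_le_reward_meas_self hk (by norm_num)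
      (hp _ (hk0.trans hk1) h1) hk2
  · refine le_max_of_le_left (le_trans ?_ hmeas1)
    exact reward_meas_fallback_self_le hk.symm hε hk0 (hk1.trans h1) (hp _ hk0 (hk1.trans h1))
      hk1
  · exact le_max_of_le_left hmeas1

section coveringLP

variable {α ι : Type*} [Fintype ι] [Nonempty ι]

lemma ciInf_div_le_sum_mul {r D η : ι → ℝ} (hD : ∀ i, 0 < D i) (hr : ∀ i, 0 ≤ r i)
    (hη : ∀ i, 0 ≤ η i) (hcover : 1 ≤ ∑ i, η i * D i) :
    ⨅ i, r i / D i ≤ ∑ i, η i * r i := by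
  set m := ⨅ i, r i / D i
  have hm : ∀ i, m * D i ≤ r i := fun i =>
    (le_div_iff₀ (hD i)).1 (ciInf_le (Finite.bddBelow_range _) i)
  calc m ≤ m * ∑ i, η i * D i :=
        le_mul_of_one_le_right (le_ciInf fun i => div_nonneg (hr i) (hD i).le) hcover
    _ = ∑ i, η i * (m * D i) := by rw [Finset.mul_sum]; congr 1; ext i; ring
    _ ≤ ∑ i, η i * r i := Finset.sum_le_sum fun i _ => mul_le_mul_of_nonneg_left (hm i) (hη i)

lemma exists_sum_mul_eq_one_and_eq_ciInf_div (r : ι → ℝ) {D : ι → ℝ} (hD : ∀ i, 0 < D i) :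
    ∃ η : ι → ℝ, (∀ i, 0 ≤ η i) ∧ ∑ i, η i * D i = 1 ∧ ∑ i, η i * r i = ⨅ i, r i / D i := by
  classical
  obtain ⟨i₀, hi₀⟩ := exists_eq_ciInf_of_finite (f := fun i => r i / D i)
  refine ⟨Pi.single i₀ (D i₀)⁻¹, fun i => ?_, ?_, ?_⟩
  · rcases eq_or_ne i i₀ with rfl | h
    · simpa using (hD i).le
    · simp [h]
  · simp [Pi.single_apply, (hD i₀).ne']
  · rw [← hi₀]
    simp [Pi.single_apply, div_eq_inv_mul]

theorem isLeast_sum_ciInf_div (S : Finset α) (r D : α → ι → ℝ)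
    (hD : ∀ k ∈ S, ∀ i, 0 < D k i) (hr : ∀ k ∈ S, ∀ i, 0 ≤ r k i) :
    IsLeast {x : ℝ | ∃ η : α → ι → ℝ, (∀ k i, 0 ≤ η k i) ∧
        (∀ k ∈ S, 1 ≤ ∑ i, η k i * D k i) ∧ x = ∑ k ∈ S, ∑ i, η k i * r k i}
      (∑ k ∈ S, ⨅ i, r k i / D k i) := by
  classical
  have hopt : ∀ k, ∃ η : ι → ℝ, (∀ i, 0 ≤ η i) ∧
      (k ∈ S → ∑ i, η i * D k i = 1 ∧ ∑ i, η i * r k i = ⨅ i, r k i / D k i) := fun k =>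
    if hk : k ∈ S then
      (exists_sum_mul_eq_one_and_eq_ciInf_div (r k) (hD k hk)).imp fun _ h => ⟨h.1, fun _ => h.2⟩
    else ⟨0, fun _ => le_rfl, fun h => absurd h hk⟩
  choose η hη0 hη using hopt
  refine ⟨⟨η, hη0, fun k hk => (hη k hk).1.ge,
    Finset.sum_congr rfl fun k hk => (hη k hk).2.symm⟩, ?_⟩
  rintro x ⟨η, hη, hcover, rfl⟩
  exact Finset.sum_le_sum fun k hk =>
    ciInf_div_le_sum_mul (hD k hk) (hr k hk) (hη k) (hcover k hk)

end coveringLP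

open Classical in
lemma exploration_set_spec {K : ℕ} {θ : ℕ → ℝ} {ε c : ℝ} (hK : 2 ≤ K)
    (hanti : StrictAntiOn θ (Set.Icc 1 K)) (hKpos : 0 < θ K) (h1 : θ 1 < 1) (hε0 : 0 ≤ ε)
    (hε : ε < 1) :
    let μ12 := reward θ ε c (.meas 1 1 2)
    let S : Finset ℕ := if θ 1 > μ12 then Finset.Icc 2 K else Finset.Icc 3 K
    let θbar : ℝ := if θ 1 > μ12 then min (θ 1) ((c + ε * θ 1) / p0 ε (θ 1)) else θ 2
    θbar < 1 ∧ ∀ k ∈ S, k ≠ 1 ∧ 0 < θ k ∧ θ k ≤ θ 2 ∧ θ k < θbar := by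
  intro μ12 S θbar
  have h21 : θ 2 < θ 1 := hanti ⟨le_rfl, by omega⟩ ⟨one_le_two, hK⟩ one_lt_two
  have hθpos : ∀ k ∈ Set.Icc 1 K, 0 < θ k := fun k hk =>
    hKpos.trans_le (hanti.antitoneOn hk ⟨by omega, le_rfl⟩ hk.2)
  have hS : ∀ k ∈ S, k ≠ 1 ∧ 0 < θ k ∧ θ k ≤ θ 2 := by
    intro k hk
    replace hk : 2 ≤ k ∧ k ≤ K := by
      simp only [S] at hk
      split_ifs at hk <;> rw [Finset.mem_Icc] at hk <;> omega
    exact ⟨by omega, hθpos k ⟨by omega, hk.2⟩,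
      hanti.antitoneOn ⟨one_le_two, hK⟩ ⟨by omega, hk.2⟩ hk.1⟩
  suffices θbar < 1 ∧ ∀ k ∈ S, θ k < θbar from
    ⟨this.1, fun k hk => ⟨(hS k hk).1, (hS k hk).2.1, (hS k hk).2.2, this.2 k hk⟩⟩
  by_cases h : θ 1 > μ12
  · have h2bar : θ 2 < (c + ε * θ 1) / p0 ε (θ 1) :=
      lt_div_p0_of_reward_meas_self_lt (by norm_num)
        (p0_pos hε0 hε (hθpos 1 ⟨le_rfl, by omega⟩).le h1) h
    rw [show θbar = min (θ 1) ((c + ε * θ 1) / p0 ε (θ 1)) from if_pos h]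
    exact ⟨(min_le_left _ _).trans_lt h1,
      fun k hk => (hS k hk).2.2.trans_lt (lt_min h21 h2bar)⟩
  · rw [show θbar = θ 2 from if_neg h, show S = Finset.Icc 3 K from if_neg h]
    refine ⟨h21.trans h1, fun k hk => ?_⟩
    rw [Finset.mem_Icc] at hk
    exact hanti ⟨one_le_two, hK⟩ ⟨by omega, hk.2⟩ (by omega)

open Classical in
theorem stmt9_general (K : ℕ) (hK : 2 ≤ K) (θ : ℕ → ℝ)
    (h1 : θ 1 < 1) (hKpos : 0 < θ K)
    (hmono : ∀ i, 1 ≤ i → i < K → θ (i + 1) < θ i)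
    (c ε : ℝ) (hc : 0 < c) (hε0 : 0 < ε) (hε : ε < 1 / 2) :
    let μ12 := reward θ ε c (.meas 1 1 2)
    let μstar := max (θ 1) μ12
    let S : Finset ℕ := if θ 1 > μ12 then Finset.Icc 2 K else Finset.Icc 3 K
    let θbar : ℝ :=
      if θ 1 > μ12 then min (θ 1) ((c + ε * θ 1) / p0 ε (θ 1)) else θ 2
    (∀ k ∈ S, θ k < θbar) ∧
    (∀ k ∈ S, ∀ i : Fin 4, 0 < D9 θ ε k θbar i) ∧
    IsLeast
      {x : ℝ | ∃ η : ℕ → Fin 4 → ℝ, (∀ k i, 0 ≤ η k i) ∧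
        (∀ k ∈ S, 1 ≤ ∑ i : Fin 4, η k i * D9 θ ε k θbar i) ∧
        x = ∑ k ∈ S, ∑ i : Fin 4, η k i * (μstar - reward θ ε c (pol9 k i))}
      (∑ k ∈ S, ⨅ i : Fin 4, (μstar - reward θ ε c (pol9 k i)) / D9 θ ε k θbar i) := by
  intro μ12 μstar S θbar
  have hanti : StrictAntiOn θ (Set.Icc 1 K) :=
    strictAntiOn_of_succ_lt Set.ordConnected_Icc fun a _ ha hb =>
      hmono a ha.1 (Order.succ_le_iff.1 hb.2)
  have h21 : θ 2 < θ 1 := hanti ⟨le_rfl, by omega⟩ ⟨one_le_two, hK⟩ one_lt_two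
  obtain ⟨hbar1, hS⟩ := exploration_set_spec (c := c) hK hanti hKpos h1 hε0.le (by linarith)
  have hD : ∀ k ∈ S, ∀ i, 0 < D9 θ ε k θbar i := fun k hk =>
    have ⟨_, hk0, _, hkbar⟩ := hS k hk
    D9_pos hε0.le hε hk0 (hkbar.trans hbar1) (hk0.trans hkbar) hbar1 hkbar.ne
  refine ⟨fun k hk => (hS k hk).2.2.2, hD, isLeast_sum_ciInf_div S _ _ hD fun k hk i => ?_⟩
  obtain ⟨hk1, hk0, hk2, -⟩ := hS k hk
  exact sub_nonneg.2 (reward_pol9_le hk1 hc.le hε0.le hε.le hk0.le hk2 h21.le h1.le i)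

open Classical in
/-- The regret lower-bound optimization problem of Theorem 2 (imperfect
measurements): with `u* = (1)`, `S = {2,…,K}`, `θ̄ = min(θ_1,(c+εθ_1)/p0(θ_1))` when
`θ_1 > μ((1,2))`, and `u* = (1,2)`, `S = {3,…,K}`, `θ̄ = θ_2` otherwise, we have
`θ_k < θ̄` and `D_u(θ̄) > 0` for all `k ∈ S`, `u ∈ U_1(k)`, and minimizing
`Σ_{k∈S} Σ_{u∈U_1(k)} η_{k,u}(μ* − μ(u))` over nonnegative `η` subject to
`Σ_{u∈U_1(k)} η_{k,u} D_u(θ̄) ≥ 1` for every `k ∈ S` has minimum value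
`C_ε(θ) = Σ_{k∈S} min_{u∈U_1(k)} (μ* − μ(u))/D_u(θ̄)`. -/
theorem stmt9 (K : ℕ) (hK : 2 ≤ K) (θ : ℕ → ℝ)
    (h1 : θ 1 < 1) (hKpos : 0 < θ K)
    (hmono : ∀ i, 1 ≤ i → i < K → θ (i + 1) < θ i)
    (c ε : ℝ) (hc : 0 < c) (hε0 : 0 < ε) (hε : ε < 1 / 2)
    (hne : θ 1 ≠ reward θ ε c (.meas 1 1 2)) :
    let μ12 := reward θ ε c (.meas 1 1 2)
    let μstar := max (θ 1) μ12
    let S : Finset ℕ := if θ 1 > μ12 then Finset.Icc 2 K else Finset.Icc 3 K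
    let θbar : ℝ :=
      if θ 1 > μ12 then min (θ 1) ((c + ε * θ 1) / p0 ε (θ 1)) else θ 2
    (∀ k ∈ S, θ k < θbar) ∧
    (∀ k ∈ S, ∀ i : Fin 4, 0 < D9 θ ε k θbar i) ∧
    IsLeast
      {x : ℝ | ∃ η : ℕ → Fin 4 → ℝ, (∀ k i, 0 ≤ η k i) ∧
        (∀ k ∈ S, 1 ≤ ∑ i : Fin 4, η k i * D9 θ ε k θbar i) ∧
        x = ∑ k ∈ S, ∑ i : Fin 4, η k i * (μstar - reward θ ε c (pol9 k i))}
      (∑ k ∈ S, ⨅ i : Fin 4, (μstar - reward θ ε c (pol9 k i)) / D9 θ ε k θbar i) :=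
  stmt9_general K hK θ h1 hKpos hmono c ε hc hε0 hε
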